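/- Let (X,d) be a geodesic δ-hyperbolic space in which every geodesic triangle is δ'-thin, P ⊆ X finite, p₁ ∈ P, â a farthest point of P from p₁, b̂ a farthest point of P from â, and m̂ the midpoint of a geodesic [â,b̂]. For any q ∈ X, letting q' be a point of P farthest from q and m the point on [q,q'] at distance diam(P)/2 − δ from q', we have d(m, m̂) ≤ 3δ + 4δ'. -/

import Mathlib

noncomputable def gromovProd {X : Type*} [MetricSpace X] (t u v : X) : ℝ :=
  (dist u t + dist v t - dist u v) / 2

def IsDeltaHyperbolic (X : Type*) [MetricSpace X] (δ : ℝ) : Prop :=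
  ∀ t u v w : X, gromovProd t u w ≥ min (gromovProd t u v) (gromovProd t v w) - δ

/-- `γ` is a unit-speed geodesic from `a` to `b`, defined on `[0, dist a b]`. -/
def IsGeodesic {X : Type*} [MetricSpace X] (γ : ℝ → X) (a b : X) : Prop :=
  γ 0 = a ∧ γ (dist a b) = b ∧
    ∀ s ∈ Set.Icc (0 : ℝ) (dist a b), ∀ t ∈ Set.Icc (0 : ℝ) (dist a b),
      dist (γ s) (γ t) = |s - t|

/-- `X` is a geodesic space. -/
def GeodesicSpace (X : Type*) [MetricSpace X] : Prop :=
  ∀ a b : X, ∃ γ : ℝ → X, IsGeodesic γ a b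

/-- Every geodesic triangle of `X` is `δ'`-thin: points of two sides emanating from a
common vertex `t` that are identified under the comparison map to the tripod (i.e. at
equal arclength `ℓ ≤ (u|v)_t` from `t`) are at distance at most `δ'`. -/
def TrianglesThin (X : Type*) [MetricSpace X] (δ' : ℝ) : Prop :=
  ∀ (t u v : X) (γ₁ γ₂ : ℝ → X), IsGeodesic γ₁ t u → IsGeodesic γ₂ t v →
    ∀ ℓ : ℝ, 0 ≤ ℓ → ℓ ≤ gromovProd t u v → dist (γ₁ ℓ) (γ₂ ℓ) ≤ δ'

/-! A point at arclength `s` on a geodesic `[t, u]` is, by thinness of a triangle with third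
vertex `v`, within `δ'` of the point at the same arclength on `[t, v]` or on `[u, v]`, which gives
`d(γ s, v) ≤ max (d(t,v) - s) (d(u,v) - (d(t,u) - s)) + δ'`. For midpoints this says that the
midpoint of `[â, b̂]` is at distance about `max (d(x,â), d(x,b̂)) - d(â,b̂)/2` from any `x`.
Hyperbolicity at the base point `p₁` makes `d(â, b̂)` a diameter up to `2δ`. Applying both bounds
to `m` on `[q', q]` and `v = m̂`, with `d(q', m̂) ≤ diam P - d(â,b̂)/2 + δ'` and
`d(q, m̂) ≤ d(q, q') - d(â,b̂)/2 + δ'`, gives `d(m, m̂) ≤ 2δ + 2δ'`. -/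

section Geodesics

variable {X : Type*} [MetricSpace X]

lemma IsGeodesic.reverse {γ : ℝ → X} {a b : X} (h : IsGeodesic γ a b) :
    IsGeodesic (fun s => γ (dist a b - s)) b a := by
  obtain ⟨h0, h1, hd⟩ := h
  refine ⟨by simpa using h1, by simpa [dist_comm b a] using h0, ?_⟩
  intro s hs t ht
  rw [dist_comm b a, Set.mem_Icc] at hs ht
  rw [hd _ ⟨by linarith, by linarith⟩ _ ⟨by linarith, by linarith⟩, abs_sub_comm]
  ring_nf

lemma IsGeodesic.dist_apply_right {γ : ℝ → X} {a b : X} (h : IsGeodesic γ a b) {s : ℝ}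
    (hs : s ∈ Set.Icc 0 (dist a b)) : dist (γ s) b = dist a b - s := by
  conv_lhs => rw [← h.2.1]
  rw [h.2.2 s hs _ ⟨dist_nonneg, le_rfl⟩, abs_of_nonpos (by linarith [hs.2]), neg_sub]

end Geodesics

section GromovProduct

variable {X : Type*} [MetricSpace X]

lemma gromovProd_le_dist_right (t u v : X) : gromovProd t u v ≤ dist t v := by
  unfold gromovProd
  linarith [dist_triangle u v t, dist_comm v t, dist_comm t v]

lemma gromovProd_add_gromovProd_swap (t u v : X) :
    gromovProd t u v + gromovProd u t v = dist t u := by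
  unfold gromovProd
  rw [dist_comm u t, dist_comm v t, dist_comm v u]
  ring

lemma IsDeltaHyperbolic.nonneg {δ : ℝ} (hX : IsDeltaHyperbolic X δ) (x : X) : 0 ≤ δ := by
  simpa [gromovProd] using hX x x x x

lemma IsDeltaHyperbolic.dist_le_dist_of_farthest {δ : ℝ} (hX : IsDeltaHyperbolic X δ)
    {P : Set X} {p a b : X} (ha : ∀ x ∈ P, dist p x ≤ dist p a)
    (hb : ∀ x ∈ P, dist a x ≤ dist a b) {x y : X} (hx : x ∈ P) (hy : y ∈ P) :
    dist x y ≤ dist a b + 2 * δ := by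
  have h := hX p x a y
  unfold gromovProd at h
  rcases min_cases ((dist x p + dist a p - dist x a) / 2) ((dist a p + dist y p - dist a y) / 2)
    with ⟨hmin, -⟩ | ⟨hmin, -⟩ <;> rw [hmin] at h
  · linarith [ha y hy, hb x hx, dist_comm p a, dist_comm p y, dist_comm a x]
  · linarith [ha x hx, hb y hy, dist_comm p a, dist_comm p x, dist_comm a y, dist_comm x y]

end GromovProduct

section ThinTriangles

variable {X : Type*} [MetricSpace X] {δ' : ℝ}

lemma TrianglesThin.nonneg (hgeo : GeodesicSpace X) (hthin : TrianglesThin X δ') (x : X) :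
    0 ≤ δ' := by
  obtain ⟨γ, hγ⟩ := hgeo x x
  simpa using hthin x x x γ γ hγ hγ 0 le_rfl (by simp [gromovProd])

lemma TrianglesThin.dist_apply_le_of_le_gromovProd (hgeo : GeodesicSpace X)
    (hthin : TrianglesThin X δ') {γ : ℝ → X} {t u : X} (hγ : IsGeodesic γ t u) (v : X)
    {s : ℝ} (hs₀ : 0 ≤ s) (hs : s ≤ gromovProd t u v) :
    dist (γ s) v ≤ dist t v - s + δ' := by
  obtain ⟨η, hη⟩ := hgeo t v
  have hsv : s ∈ Set.Icc 0 (dist t v) := ⟨hs₀, hs.trans (gromovProd_le_dist_right t u v)⟩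
  calc dist (γ s) v ≤ dist (γ s) (η s) + dist (η s) v := dist_triangle _ _ _
    _ ≤ δ' + (dist t v - s) := by
        rw [hη.dist_apply_right hsv]
        gcongr
        exact hthin t u v γ η hγ hη s hs₀ hs
    _ = dist t v - s + δ' := add_comm _ _

lemma TrianglesThin.dist_apply_le_max (hgeo : GeodesicSpace X) (hthin : TrianglesThin X δ')
    {γ : ℝ → X} {t u : X} (hγ : IsGeodesic γ t u) (v : X) {s : ℝ}
    (hs : s ∈ Set.Icc 0 (dist t u)) :
    dist (γ s) v ≤ max (dist t v - s) (dist u v - (dist t u - s)) + δ' := by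
  rcases le_or_gt s (gromovProd t u v) with hle | hgt
  · exact (hthin.dist_apply_le_of_le_gromovProd hgeo hγ v hs.1 hle).trans
      (add_le_add_left (le_max_left _ _) _)
  · have hrev := hthin.dist_apply_le_of_le_gromovProd hgeo hγ.reverse v
      (s := dist t u - s) (by linarith [hs.2])
      (by linarith [gromovProd_add_gromovProd_swap t u v])
    simp only [sub_sub_cancel] at hrev
    exact hrev.trans (add_le_add_left (le_max_right _ _) _)

lemma TrianglesThin.dist_midpoint_le (hgeo : GeodesicSpace X) (hthin : TrianglesThin X δ')
    {γ : ℝ → X} {a b : X} (hγ : IsGeodesic γ a b) (v : X) :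
    dist v (γ (dist a b / 2)) ≤ max (dist v a) (dist v b) - dist a b / 2 + δ' := by
  have h := hthin.dist_apply_le_max hgeo hγ v (s := dist a b / 2)
    ⟨by positivity, by linarith [dist_nonneg (x := a) (y := b)]⟩
  rwa [show dist a b - dist a b / 2 = dist a b / 2 by ring, max_sub_sub_right, dist_comm a v,
    dist_comm b v, dist_comm (γ _) v] at h

end ThinTriangles

theorem near_approx_diametral_midpoint_general {X : Type*} [MetricSpace X] {δ δ' : ℝ}
    (hgeo : GeodesicSpace X) (hX : IsDeltaHyperbolic X δ) (hthin : TrianglesThin X δ')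
    (P : Finset X) (astar bstar : X) (hastar : astar ∈ P) (hbstar : bstar ∈ P)
    (hdiam : ∀ p ∈ P, ∀ p' ∈ P, dist p p' ≤ dist astar bstar)
    (p₁ ahat bhat : X) (hahat : ahat ∈ P) (hbhat : bhat ∈ P)
    (hahat_far : ∀ p ∈ P, dist p₁ p ≤ dist p₁ ahat)
    (hbhat_far : ∀ p ∈ P, dist ahat p ≤ dist ahat bhat)
    (γhat : ℝ → X) (hγhat : IsGeodesic γhat ahat bhat)
    (mhat : X) (hmhat : mhat = γhat (dist ahat bhat / 2))
    (q q' : X) (hq' : q' ∈ P) (hfar : ∀ p ∈ P, dist q p ≤ dist q q')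
    (γ : ℝ → X) (hγ : IsGeodesic γ q' q)
    (hnonneg : 0 ≤ dist astar bstar / 2 - δ)
    (hlen : dist astar bstar / 2 - δ ≤ dist q q')
    (m : X) (hm : m = γ (dist astar bstar / 2 - δ)) :
    dist m mhat ≤ 3 * δ + 4 * δ' := by
  have hδ := hX.nonneg q
  have hδ' := hthin.nonneg hgeo q
  have hhat : dist astar bstar ≤ dist ahat bhat + 2 * δ :=
    hX.dist_le_dist_of_farthest (P := P) hahat_far hbhat_far hastar hbstar
  have hq'_mhat : dist q' mhat ≤ dist astar bstar - dist ahat bhat / 2 + δ' := by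
    have := hmhat ▸ hthin.dist_midpoint_le hgeo hγhat q'
    linarith [max_le (hdiam q' hq' ahat hahat) (hdiam q' hq' bhat hbhat)]
  have hq_mhat : dist q mhat ≤ dist q q' - dist ahat bhat / 2 + δ' := by
    have := hmhat ▸ hthin.dist_midpoint_le hgeo hγhat q
    linarith [max_le (hfar ahat hahat) (hfar bhat hbhat)]
  have hm_mhat := hthin.dist_apply_le_max hgeo hγ mhat ⟨hnonneg, hlen.trans_eq (dist_comm q q')⟩
  rw [← hm, dist_comm q' q] at hm_mhat
  calc dist m mhat ≤ max (dist q' mhat - (dist astar bstar / 2 - δ))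
        (dist q mhat - (dist q q' - (dist astar bstar / 2 - δ))) + δ' := hm_mhat
    _ ≤ (2 * δ + δ') + δ' := by gcongr; exact max_le (by linarith) (by linarith)
    _ ≤ 3 * δ + 4 * δ' := by linarith

theorem near_approx_diametral_midpoint {X : Type*} [MetricSpace X] {δ δ' : ℝ}
    (hgeo : GeodesicSpace X) (hX : IsDeltaHyperbolic X δ) (hthin : TrianglesThin X δ')
    (P : Finset X) (astar bstar : X) (hastar : astar ∈ P) (hbstar : bstar ∈ P)
    (hdiam : ∀ p ∈ P, ∀ p' ∈ P, dist p p' ≤ dist astar bstar)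
    (p₁ ahat bhat : X) (hp₁ : p₁ ∈ P) (hahat : ahat ∈ P) (hbhat : bhat ∈ P)
    (hahat_far : ∀ p ∈ P, dist p₁ p ≤ dist p₁ ahat)
    (hbhat_far : ∀ p ∈ P, dist ahat p ≤ dist ahat bhat)
    (γhat : ℝ → X) (hγhat : IsGeodesic γhat ahat bhat)
    (mhat : X) (hmhat : mhat = γhat (dist ahat bhat / 2))
    (q q' : X) (hq' : q' ∈ P) (hfar : ∀ p ∈ P, dist q p ≤ dist q q')
    (γ : ℝ → X) (hγ : IsGeodesic γ q' q)
    (hnonneg : 0 ≤ dist astar bstar / 2 - δ)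
    (hlen : dist astar bstar / 2 - δ ≤ dist q q')
    (m : X) (hm : m = γ (dist astar bstar / 2 - δ)) :
    dist m mhat ≤ 3 * δ + 4 * δ' :=
  near_approx_diametral_midpoint_general hgeo hX hthin P astar bstar hastar hbstar hdiam p₁ ahat
    bhat hahat hbhat hahat_far hbhat_far γhat hγhat mhat hmhat q q' hq' hfar γ hγ hnonneg hlen m hm
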